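/- arXiv:math/0208254 — 5 statements merged into one kernel-verified Lean document; each statement's English description precedes it below -/
import Mathlib

section
/- Let V₁ and V₂ be finite-dimensional complex inner product spaces and let e : V₁ → V₂ be a linear map. On the product space V₁ × V₂ (with the product inner product) define the linear operator E by E(x, y) = (0, e x), and for any linear map f : V₂ → V₁ define F_f by F_f(x, y) = (f y, 0) and H_f = E ∘ F_f − F_f ∘ E. Then there exists a unique linear map f : V₂ → V₁ such that H_f ∘ E − E ∘ H_f = 2 • E, H_f ∘ F_f − F_f ∘ H_f = −2 • F_f, and H_f is self-adjoint. In other words, every linear map e between finite-dimensional complex inner product spaces embeds, in a unique way, into an sl₂-triple ⟨E, H, F⟩ of operators on V₁ × V₂ of the above block form whose characteristic H is Hermitian. -/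
/-!
With `E`, `F` of this block form, `H (x, y) = (-f (e x), e (f y))`. Hence `[H, E] = 2E` says
`e f e = e`, `[H, F] = -2F` says `f e f = f`, and `H` is Hermitian exactly when `f e` and `e f` are
self-adjoint. These are the four Penrose equations, so `f` must be the Moore–Penrose inverse of
`e`, which exists (it is the inverse of `e : (ker e)ᗮ ≃ range e` composed with the orthogonal
projection onto `range e`) and is unique.
-/

open scoped InnerProductSpace

variable {V₁ V₂ : Type*}
  [NormedAddCommGroup V₁] [InnerProductSpace ℂ V₁]
  [NormedAddCommGroup V₂] [InnerProductSpace ℂ V₂]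

/-- The operator `E(x, y) = (0, e x)` on `V₁ × V₂` associated to `e : V₁ → V₂`. -/
def Eop (e : V₁ →ₗ[ℂ] V₂) : (V₁ × V₂) →ₗ[ℂ] V₁ × V₂ :=
  LinearMap.prod 0 (e ∘ₗ LinearMap.fst ℂ V₁ V₂)

/-- The operator `F(x, y) = (f y, 0)` on `V₁ × V₂` associated to `f : V₂ → V₁`. -/
def Fop (f : V₂ →ₗ[ℂ] V₁) : (V₁ × V₂) →ₗ[ℂ] V₁ × V₂ :=
  LinearMap.prod (f ∘ₗ LinearMap.snd ℂ V₁ V₂) 0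

/-- The commutator `H = E ∘ F − F ∘ E`. -/
def Hop (e : V₁ →ₗ[ℂ] V₂) (f : V₂ →ₗ[ℂ] V₁) : (V₁ × V₂) →ₗ[ℂ] V₁ × V₂ :=
  Eop e ∘ₗ Fop f - Fop f ∘ₗ Eop e

/-- Self-adjointness of an operator on `V₁ × V₂` with respect to the product inner product. -/
def IsHermitianProd (H : (V₁ × V₂) →ₗ[ℂ] V₁ × V₂) : Prop :=
  ∀ p q : V₁ × V₂,
    (inner ℂ ((H p).1) q.1 : ℂ) + (inner ℂ ((H p).2) q.2 : ℂ) =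
      (inner ℂ p.1 ((H q).1) : ℂ) + (inner ℂ p.2 ((H q).2) : ℂ)

namespace LinearMap

section MoorePenrose

variable {𝕜 E F : Type*} [RCLike 𝕜]
  [NormedAddCommGroup E] [InnerProductSpace 𝕜 E] [NormedAddCommGroup F] [InnerProductSpace 𝕜 F]

structure IsMoorePenroseInverse (e : E →ₗ[𝕜] F) (f : F →ₗ[𝕜] E) : Prop where
  map_inv_map : e ∘ₗ f ∘ₗ e = e
  inv_map_inv : f ∘ₗ e ∘ₗ f = f
  isSymmetric_inv_comp : (f ∘ₗ e).IsSymmetric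
  isSymmetric_comp_inv : (e ∘ₗ f).IsSymmetric

namespace IsMoorePenroseInverse

variable {e : E →ₗ[𝕜] F} {f g : F →ₗ[𝕜] E}

theorem map_inv_map_apply (h : IsMoorePenroseInverse e f) (x : E) : e (f (e x)) = e x :=
  LinearMap.congr_fun h.map_inv_map x

theorem comp_inv_eq (hf : IsMoorePenroseInverse e f) (hg : IsMoorePenroseInverse e g) :
    e ∘ₗ f = e ∘ₗ g := by
  refine LinearMap.ext fun y => ext_inner_right 𝕜 fun z => ?_
  calc ⟪e (f y), z⟫_𝕜 = ⟪y, e (f z)⟫_𝕜 := hf.isSymmetric_comp_inv y z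
    _ = ⟪y, e (g (e (f z)))⟫_𝕜 := by rw [hg.map_inv_map_apply]
    _ = ⟪e (g y), e (f z)⟫_𝕜 := (hg.isSymmetric_comp_inv y _).symm
    _ = ⟪e (f (e (g y))), z⟫_𝕜 := (hf.isSymmetric_comp_inv _ z).symm
    _ = ⟪e (g y), z⟫_𝕜 := by rw [hf.map_inv_map_apply]

theorem inv_comp_eq (hf : IsMoorePenroseInverse e f) (hg : IsMoorePenroseInverse e g) :
    f ∘ₗ e = g ∘ₗ e := by
  refine LinearMap.ext fun x => ext_inner_right 𝕜 fun w => ?_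
  calc ⟪f (e x), w⟫_𝕜 = ⟪x, f (e w)⟫_𝕜 := hf.isSymmetric_inv_comp x w
    _ = ⟪x, f (e (g (e w)))⟫_𝕜 := by rw [hg.map_inv_map_apply]
    _ = ⟪f (e x), g (e w)⟫_𝕜 := (hf.isSymmetric_inv_comp x _).symm
    _ = ⟪g (e (f (e x))), w⟫_𝕜 := (hg.isSymmetric_inv_comp _ w).symm
    _ = ⟪g (e x), w⟫_𝕜 := by rw [hf.map_inv_map_apply]

theorem unique (hf : IsMoorePenroseInverse e f) (hg : IsMoorePenroseInverse e g) : f = g :=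
  calc f = f ∘ₗ (e ∘ₗ f) := hf.inv_map_inv.symm
    _ = (f ∘ₗ e) ∘ₗ g := by rw [hf.comp_inv_eq hg, LinearMap.comp_assoc]
    _ = g := by rw [hf.inv_comp_eq hg, LinearMap.comp_assoc, hg.inv_map_inv]

end IsMoorePenroseInverse

theorem apply_starProjection_orthogonal_ker (e : E →ₗ[𝕜] F) [(ker e).HasOrthogonalProjection]
    (x : E) : e ((ker e)ᗮ.starProjection x) = e x := by
  rw [Submodule.starProjection_orthogonal_val, map_sub,
    mem_ker.mp ((ker e).starProjection_apply_mem x), sub_zero]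

theorem starProjection_orthogonal_ker_eq_of_map_eq (e : E →ₗ[𝕜] F)
    [(ker e).HasOrthogonalProjection] {x x' : E} (h : e x = e x') :
    (ker e)ᗮ.starProjection x = (ker e)ᗮ.starProjection x' := by
  rw [← sub_eq_zero, ← map_sub]
  exact Submodule.starProjection_orthogonal_apply_eq_zero (by simp [h])

theorem exists_isMoorePenroseInverse (e : E →ₗ[𝕜] F) [(ker e).HasOrthogonalProjection]
    [(range e).HasOrthogonalProjection] : ∃ f : F →ₗ[𝕜] E, IsMoorePenroseInverse e f := by
  obtain ⟨s, hs⟩ := e.rangeRestrict.exists_rightInverse_of_surjective e.range_rangeRestrict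
  -- `e ∘ g = Q`; projecting the values of `g` onto `(ker e)ᗮ` also makes `(P ∘ g) ∘ e = P`.
  let g : F →ₗ[𝕜] E := s ∘ₗ ((range e).orthogonalProjectionOnto : F →ₗ[𝕜] range e)
  let P := (ker e)ᗮ.starProjection
  let Q := (range e).starProjection
  have e_g (y : F) : e (g y) = Q y := congr_arg Subtype.val (LinearMap.congr_fun hs _)
  have e_f (y : F) : e (P (g y)) = Q y := (apply_starProjection_orthogonal_ker e _).trans (e_g y)
  have f_e (x : E) : P (g (e x)) = P x := starProjection_orthogonal_ker_eq_of_map_eq e <| by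
    rw [e_g, Submodule.starProjection_eq_self_iff.mpr (mem_range_self e x)]
  refine ⟨(P : E →ₗ[𝕜] E) ∘ₗ g, ⟨LinearMap.ext fun x => ?_, LinearMap.ext fun y => ?_,
    fun x x' => ?_, fun y y' => ?_⟩⟩
  · exact (e_f (e x)).trans (Submodule.starProjection_eq_self_iff.mpr (mem_range_self e x))
  · exact (f_e _).trans
      (Submodule.starProjection_eq_self_iff.mpr (Submodule.starProjection_apply_mem _ _))
  · change ⟪P (g (e x)), x'⟫_𝕜 = ⟪x, P (g (e x'))⟫_𝕜
    rw [f_e, f_e]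
    exact Submodule.inner_starProjection_left_eq_right _ x x'
  · change ⟪e (P (g y)), y'⟫_𝕜 = ⟪y, e (P (g y'))⟫_𝕜
    rw [e_f, e_f]
    exact Submodule.inner_starProjection_left_eq_right _ y y'

end MoorePenrose

end LinearMap

theorem Eop_apply (e : V₁ →ₗ[ℂ] V₂) (p : V₁ × V₂) : Eop e p = (0, e p.1) := rfl

theorem Fop_apply (f : V₂ →ₗ[ℂ] V₁) (p : V₁ × V₂) : Fop f p = (f p.2, 0) := rfl

theorem Hop_apply (e : V₁ →ₗ[ℂ] V₂) (f : V₂ →ₗ[ℂ] V₁) (p : V₁ × V₂) :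
    Hop e f p = (-f (e p.1), e (f p.2)) := by
  simp [Hop, Eop_apply, Fop_apply]

theorem Eop_injective : Function.Injective (Eop : (V₁ →ₗ[ℂ] V₂) → _) := fun _ _ h =>
  LinearMap.ext fun x => congr_arg Prod.snd (LinearMap.congr_fun h (x, 0))

theorem Fop_injective : Function.Injective (Fop : (V₂ →ₗ[ℂ] V₁) → _) := fun _ _ h =>
  LinearMap.ext fun y => congr_arg Prod.fst (LinearMap.congr_fun h (0, y))

theorem Hop_comp_Eop_sub_Eop_comp_Hop (e : V₁ →ₗ[ℂ] V₂) (f : V₂ →ₗ[ℂ] V₁) :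
    Hop e f ∘ₗ Eop e - Eop e ∘ₗ Hop e f = (2 : ℂ) • Eop (e ∘ₗ f ∘ₗ e) := by
  ext p <;> simp [Hop_apply, Eop_apply, two_smul]

theorem Hop_comp_Fop_sub_Fop_comp_Hop (e : V₁ →ₗ[ℂ] V₂) (f : V₂ →ₗ[ℂ] V₁) :
    Hop e f ∘ₗ Fop f - Fop f ∘ₗ Hop e f = (-2 : ℂ) • Fop (f ∘ₗ e ∘ₗ f) := by
  ext p <;> simp [Hop_apply, Fop_apply, two_smul]; abel

theorem isHermitianProd_Hop_iff (e : V₁ →ₗ[ℂ] V₂) (f : V₂ →ₗ[ℂ] V₁) :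
    IsHermitianProd (Hop e f) ↔ (f ∘ₗ e).IsSymmetric ∧ (e ∘ₗ f).IsSymmetric := by
  simp only [IsHermitianProd, LinearMap.IsSymmetric, Hop_apply, LinearMap.comp_apply,
    inner_neg_left, inner_neg_right, Prod.forall]
  refine ⟨fun h => ⟨fun x x' => ?_, fun y y' => ?_⟩, fun ⟨h₁, h₂⟩ x y x' y' => by rw [h₁, h₂]⟩
  · simpa using h x 0 x' 0
  · simpa using h 0 y 0 y'

theorem sl2_relations_and_isHermitianProd_iff (e : V₁ →ₗ[ℂ] V₂) (f : V₂ →ₗ[ℂ] V₁) :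
    (Hop e f ∘ₗ Eop e - Eop e ∘ₗ Hop e f = (2 : ℂ) • Eop e ∧
      Hop e f ∘ₗ Fop f - Fop f ∘ₗ Hop e f = (-2 : ℂ) • Fop f ∧
      IsHermitianProd (Hop e f)) ↔ e.IsMoorePenroseInverse f := by
  rw [Hop_comp_Eop_sub_Eop_comp_Hop, Hop_comp_Fop_sub_Fop_comp_Hop, isHermitianProd_Hop_iff,
    (smul_right_injective _ two_ne_zero).eq_iff, Eop_injective.eq_iff,
    (smul_right_injective _ (neg_ne_zero.mpr two_ne_zero)).eq_iff, Fop_injective.eq_iff]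
  exact ⟨fun ⟨h₁, h₂, h₃, h₄⟩ => ⟨h₁, h₂, h₃, h₄⟩, fun h => ⟨h.1, h.2, h.3, h.4⟩⟩

theorem exists_unique_sl2_triple_hermitian_characteristic_general
    [FiniteDimensional ℂ V₁] (e : V₁ →ₗ[ℂ] V₂) :
    ∃! f : V₂ →ₗ[ℂ] V₁,
      Hop e f ∘ₗ Eop e - Eop e ∘ₗ Hop e f = (2 : ℂ) • Eop e ∧
      Hop e f ∘ₗ Fop f - Fop f ∘ₗ Hop e f = (-2 : ℂ) • Fop f ∧
      IsHermitianProd (Hop e f) := by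
  simp only [sl2_relations_and_isHermitianProd_iff]
  obtain ⟨f, hf⟩ := e.exists_isMoorePenroseInverse
  exact ⟨f, hf, fun g hg => hg.unique hf⟩

/-- Every linear map `e` between finite-dimensional complex inner product spaces embeds in a
unique way into an `sl₂`-triple `⟨E, H, F⟩` of operators of the block form above on `V₁ × V₂`
whose characteristic `H` is Hermitian. -/
theorem exists_unique_sl2_triple_hermitian_characteristic
    [FiniteDimensional ℂ V₁] [FiniteDimensional ℂ V₂] (e : V₁ →ₗ[ℂ] V₂) :
    ∃! f : V₂ →ₗ[ℂ] V₁,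
      Hop e f ∘ₗ Eop e - Eop e ∘ₗ Hop e f = (2 : ℂ) • Eop e ∧
      Hop e f ∘ₗ Fop f - Fop f ∘ₗ Hop e f = (-2 : ℂ) • Fop f ∧
      IsHermitianProd (Hop e f) :=
  exists_unique_sl2_triple_hermitian_characteristic_general e
end

section
/- For every complex matrix A of size k × n there exist a complex matrix B of size n × k and a positive-definite Hermitian matrix P of size n × n such that: 2A = 2·A·B·A − (A·B)ᵀ·A, 2B = 2·B·A·B − B·(A·B)ᵀ, P·(B·A) = (B·A)ᴴ·P, and (A·B − (A·B)ᵀ)ᴴ = A·B − (A·B)ᵀ. -/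
/-!
Let `V = range A ⊆ ℂᵏ` and `ω(x, y) = xᵀy`. The radical `V₀ = V ∩ ker Aᵀ` of `ω` on `V` has a
Hermitian complement `V₁` in `V` on which `ω` is nondegenerate. With `E` the Hermitian projection
onto `V₀` and `Q = Qᵀ` the `ω`-orthogonal projection onto `V₁`, choose `B` with `A * B = 2Q + E`.
The two cubic identities then reduce to `QE = EQ = 0`, `EᵀA = 0` and `EᵀE = 0` (`V₀` is
`ω`-isotropic), while `B * A` has eigenvalues `0, 1, 2`; a diagonalizable matrix with real
eigenvalues is self-adjoint for the inner product `∑ pᵢᴴ pᵢ` built from its spectral idempotents.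
-/

open Matrix
open scoped ComplexOrder

theorem Matrix.exists_mul_eq_of_range_le {R m n l : Type*} [CommSemiring R] [Fintype n]
    [Fintype l] [DecidableEq l] {A : Matrix m n R} {M : Matrix m l R}
    (h : LinearMap.range M.mulVecLin ≤ LinearMap.range A.mulVecLin) :
    ∃ X : Matrix n l R, A * X = M := by
  choose f hf using fun j ↦ h (LinearMap.mem_range_self M.mulVecLin (Pi.single j 1))
  refine ⟨(Matrix.of f)ᵀ, ext_of_mulVec_single fun j ↦ ?_⟩
  rw [← mulVec_mulVec, mulVec_single_one]
  exact hf j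

/-- `F * G * Fᵀ` is the projection onto the range of `F` along its orthogonal complement for the
bilinear form `xᵀy`. -/
theorem Matrix.exists_symmetric_idempotent_mul_eq_self {R n : Type*} [CommRing R] [Fintype n]
    [DecidableEq n] {F : Matrix n n R} (hF : IsIdempotentElem F)
    (hM : IsUnit (Fᵀ * F + (1 - F)ᵀ * (1 - F))) :
    ∃ G : Matrix n n R, IsIdempotentElem (F * G * Fᵀ) ∧ (F * G * Fᵀ)ᵀ = F * G * Fᵀ ∧
      F * G * Fᵀ * F = F := by
  set M := Fᵀ * F + (1 - F)ᵀ * (1 - F)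
  have hMt : Mᵀ = M := by simp [M, transpose_mul]
  have hMF : M * F = Fᵀ * F := by
    rw [add_mul, Matrix.mul_assoc, hF.eq, Matrix.mul_assoc, hF.one_sub_mul_self, Matrix.mul_zero,
      add_zero]
  have hQF : F * M⁻¹ * Fᵀ * F = F := by
    rw [Matrix.mul_assoc, ← hMF, ← Matrix.mul_assoc, Matrix.mul_assoc F,
      nonsing_inv_mul _ ((isUnit_iff_isUnit_det M).mp hM), Matrix.mul_one, hF.eq]
  refine ⟨M⁻¹, ?_, ?_, hQF⟩
  · rw [IsIdempotentElem, ← Matrix.mul_assoc, ← Matrix.mul_assoc, hQF]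
  · rw [transpose_mul, transpose_mul, transpose_transpose, transpose_nonsing_inv, hMt,
      Matrix.mul_assoc]

section
variable {𝕜 : Type*} [RCLike 𝕜] {k n : Type*} [Fintype k] [DecidableEq k] [Fintype n]

theorem Matrix.posDef_sum_conjTranspose_mul_self [DecidableEq n] {ι : Type*} [Fintype ι]
    {p : ι → Matrix n n 𝕜} (hp : ∑ i, p i = 1) : (∑ i, (p i)ᴴ * p i).PosDef := by
  refine posDef_iff_dotProduct_mulVec.mpr
    ⟨(posSemidef_sum _ fun i _ ↦ posSemidef_conjTranspose_mul_self (p i)).isHermitian,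
      fun x hx ↦ ?_⟩
  obtain ⟨i, hi⟩ : ∃ i, p i *ᵥ x ≠ 0 := by
    by_contra! h
    exact hx (by rw [← one_mulVec x, ← hp, sum_mulVec]; exact Finset.sum_eq_zero fun i _ ↦ h i)
  rw [sum_mulVec, dotProduct_sum]
  refine Finset.sum_pos'
    (fun j _ ↦ (posSemidef_conjTranspose_mul_self _).dotProduct_mulVec_nonneg x)
    ⟨i, Finset.mem_univ _, ?_⟩
  rwa [← mulVec_mulVec, dotProduct_mulVec, ← star_mulVec, dotProduct_star_self_pos_iff]

theorem Matrix.exists_posDef_mul_eq_conjTranspose_mul [DecidableEq n] {ι : Type*} [Fintype ι]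
    (T : Matrix n n 𝕜) (p : ι → Matrix n n 𝕜) (μ : ι → ℝ) (hp : ∑ i, p i = 1)
    (hpT : ∀ i, p i * T = (μ i : 𝕜) • p i) :
    ∃ P : Matrix n n 𝕜, P.PosDef ∧ P * T = Tᴴ * P := by
  refine ⟨_, posDef_sum_conjTranspose_mul_self hp, ?_⟩
  have hTp : ∀ i, Tᴴ * (p i)ᴴ = (μ i : 𝕜) • (p i)ᴴ := fun i ↦ by
    rw [← conjTranspose_mul, hpT, conjTranspose_smul, RCLike.star_def, RCLike.conj_ofReal]
  rw [Finset.sum_mul, Finset.mul_sum]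
  refine Finset.sum_congr rfl fun i _ ↦ ?_
  rw [Matrix.mul_assoc, hpT, ← Matrix.mul_assoc, hTp, Matrix.mul_smul, Matrix.smul_mul]

theorem Matrix.exists_isStarProjection_onto [DecidableEq n] (K : Submodule 𝕜 (n → 𝕜)) :
    ∃ M : Matrix n n 𝕜, IsStarProjection M ∧ (∀ v, M *ᵥ v ∈ K) ∧ ∀ v ∈ K, M *ᵥ v = v := by
  let K' : Submodule 𝕜 (EuclideanSpace 𝕜 n) :=
    K.comap (WithLp.linearEquiv 2 𝕜 (n → 𝕜)).toLinearMap
  let M : Matrix n n 𝕜 := (toEuclideanCLM (n := n) (𝕜 := 𝕜)).symm K'.starProjection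
  have hM : ∀ v, M *ᵥ v = WithLp.ofLp (K'.starProjection (WithLp.toLp 2 v)) := fun v ↦ by
    rw [← ofLp_toEuclideanCLM, StarAlgEquiv.apply_symm_apply]
  refine ⟨M, isStarProjection_starProjection.map
    (toEuclideanCLM (n := n) (𝕜 := 𝕜)).symm.toStarAlgHom,
    fun v ↦ hM v ▸ K'.starProjection_apply_mem _, fun v hv ↦ ?_⟩
  rw [hM, K'.starProjection_eq_self_iff.mpr hv]

theorem Matrix.isUnit_transpose_mul_self_add_of_isStarProjection [DecidableEq n]
    {F : Matrix n n 𝕜} (hF : IsStarProjection F) (hnd : ∀ z, Fᵀ *ᵥ (F *ᵥ z) = 0 → F *ᵥ z = 0) :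
    IsUnit (Fᵀ * F + (1 - F)ᵀ * (1 - F)) := by
  have hFh : Fᴴ = F := hF.isSelfAdjoint.star_eq
  have hFt : IsIdempotentElem Fᵀ := by
    simpa [IsIdempotentElem, transpose_mul] using congrArg transpose hF.isIdempotentElem.eq
  refine mulVec_injective_iff_isUnit.mp fun x y hxy ↦ sub_eq_zero.mp ?_
  set z := x - y
  have hz : (Fᵀ * F + (1 - F)ᵀ * (1 - F)) *ᵥ z = 0 := by rw [mulVec_sub, hxy, sub_self]
  have hFM : Fᵀ * (Fᵀ * F + (1 - F)ᵀ * (1 - F)) = Fᵀ * F := by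
    rw [Matrix.mul_add, ← Matrix.mul_assoc, hFt.eq, ← Matrix.mul_assoc, ← transpose_mul,
      hF.isIdempotentElem.one_sub_mul_self, transpose_zero, Matrix.zero_mul, add_zero]
  have hFz : F *ᵥ z = 0 := hnd z <| by
    rw [mulVec_mulVec, ← hFM, ← mulVec_mulVec, hz, mulVec_zero]
  have hFtz : Fᵀ *ᵥ z = z := by
    simpa [add_mulVec, ← mulVec_mulVec, hFz, sub_mulVec, sub_eq_zero, eq_comm] using hz
  -- `F` is Hermitian, so conjugation exchanges `F` and `Fᵀ`: `star z` lies in the range of `F`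
  -- and is `xᵀy`-orthogonal to it.
  have hF_star : F *ᵥ star z = star z := by
    rw [← vecMul_transpose, ← hFh, ← conjTranspose_transpose_eq_transpose_conjTranspose,
      ← star_mulVec, hFtz]
  have hFt_star : Fᵀ *ᵥ star z = 0 := by
    rw [mulVec_transpose, ← hFh, ← star_mulVec, hFz, star_zero]
  refine star_eq_zero.mp ?_
  rw [← hF_star]
  exact hnd _ (by rw [hF_star, hFt_star])

/-- `E` projects onto the radical `range A ∩ ker Aᵀ` of the form `xᵀy` on `range A`, and `F` onto
its Hermitian complement in `range A`; the last clause says that `xᵀy` is nondegenerate on the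
range of `F`. -/
theorem Matrix.exists_radical_decomposition (A : Matrix k n 𝕜) :
    ∃ (E F : Matrix k k 𝕜) (Y : Matrix n k 𝕜), IsStarProjection E ∧ IsStarProjection F ∧
      E * F = 0 ∧ Aᵀ * E = 0 ∧ A * Y = E + F ∧ (E + F) * A = A ∧
      ∀ z, Fᵀ *ᵥ (F *ᵥ z) = 0 → F *ᵥ z = 0 := by
  set V := LinearMap.range A.mulVecLin
  obtain ⟨P, hP, hPV, hVP⟩ := exists_isStarProjection_onto V
  obtain ⟨E, hE, hEV0, hV0E⟩ :=
    exists_isStarProjection_onto (V ⊓ LinearMap.ker Aᵀ.mulVecLin)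
  obtain ⟨Y, hY⟩ := exists_mul_eq_of_range_le (A := A) (M := P) <| by
    rintro _ ⟨v, rfl⟩
    exact hPV v
  have hPA : P * A = A := ext_iff_mulVec.mpr fun c ↦ by
    rw [← mulVec_mulVec]; exact hVP _ ⟨c, rfl⟩
  have hPE : P * E = E := ext_iff_mulVec.mpr fun v ↦ by
    rw [← mulVec_mulVec]; exact hVP _ (hEV0 v).1
  have hAtE : Aᵀ * E = 0 := ext_iff_mulVec.mpr fun v ↦ by
    rw [← mulVec_mulVec, zero_mulVec]; exact (hEV0 v).2
  have hEP : E * P = E := by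
    simpa [hE.isSelfAdjoint.star_eq, hP.isSelfAdjoint.star_eq] using congrArg star hPE
  have hEF : E * (P - E) = 0 := by rw [mul_sub, hEP, hE.isIdempotentElem.eq, sub_self]
  refine ⟨E, P - E, Y, hE, hE.sub_of_mul_eq_right hP hPE, hEF, hAtE, by rw [hY, add_sub_cancel],
    by rw [add_sub_cancel, hPA], fun z hz ↦ ?_⟩
  have hFA : A * (Y * (1 - E)) = P - E := by
    rw [← Matrix.mul_assoc, hY, mul_sub, mul_one, hPE]
  have hw : (P - E) *ᵥ z ∈ V ⊓ LinearMap.ker Aᵀ.mulVecLin := by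
    refine ⟨⟨(Y * (1 - E)) *ᵥ z, by simp [mulVec_mulVec, hFA]⟩, ?_⟩
    have hFtE : (P - E)ᵀ * E = 0 := by
      rw [← hFA, transpose_mul, Matrix.mul_assoc, hAtE, Matrix.mul_zero]
    have hEtF : Eᵀ * (P - E) = 0 := by simpa [transpose_mul] using congrArg transpose hFtE
    have hAt : Aᵀ = Aᵀ * Eᵀ + Aᵀ * (P - E)ᵀ := by
      rw [← Matrix.mul_add, ← transpose_add, add_sub_cancel, ← transpose_mul, hPA]
    change Aᵀ *ᵥ ((P - E) *ᵥ z) = 0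
    rw [hAt, add_mulVec, ← mulVec_mulVec, ← mulVec_mulVec, hz, mulVec_zero, add_zero,
      mulVec_mulVec _ Eᵀ, hEtF, zero_mulVec, mulVec_zero]
  calc (P - E) *ᵥ z = E *ᵥ ((P - E) *ᵥ z) := (hV0E _ hw).symm
    _ = 0 := by rw [mulVec_mulVec, hEF, zero_mulVec]

theorem Matrix.exists_symmetric_projection_of_radical_decomposition {A : Matrix k n 𝕜}
    {E F : Matrix k k 𝕜} {Y : Matrix n k 𝕜} (hE : IsStarProjection E) (hF : IsStarProjection F)
    (hEF : E * F = 0) (hAtE : Aᵀ * E = 0) (hAY : A * Y = E + F) (hA : (E + F) * A = A)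
    (hnd : ∀ z, Fᵀ *ᵥ (F *ᵥ z) = 0 → F *ᵥ z = 0) :
    ∃ (Q : Matrix k k 𝕜) (C : Matrix n k 𝕜), IsIdempotentElem Q ∧ Qᵀ = Q ∧ Q * E = 0 ∧
      E * Q = 0 ∧ A * C = Q + E ∧ (Q + E) * A = A := by
  obtain ⟨G, hQ, hQt, hQF⟩ := exists_symmetric_idempotent_mul_eq_self hF.isIdempotentElem
    (isUnit_transpose_mul_self_add_of_isStarProjection hF hnd)
  have hFE : F * E = 0 := by
    simpa [hE.isSelfAdjoint.star_eq, hF.isSelfAdjoint.star_eq] using congrArg star hEF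
  have hEFF : (E + F) * F = F := by rw [add_mul, hEF, hF.isIdempotentElem.eq, zero_add]
  have hFtE : Fᵀ * E = 0 := by
    rw [← hEFF, ← hAY, Matrix.mul_assoc, transpose_mul, Matrix.mul_assoc, hAtE, Matrix.mul_zero]
  have hQE : F * G * Fᵀ * E = 0 := by rw [Matrix.mul_assoc, hFtE, Matrix.mul_zero]
  have hEQ : E * (F * G * Fᵀ) = 0 := by
    rw [← Matrix.mul_assoc, ← Matrix.mul_assoc, hEF, Matrix.zero_mul, Matrix.zero_mul]
  refine ⟨F * G * Fᵀ, Y * (F * G * Fᵀ + E), hQ, hQt, hQE, hEQ, ?_, ?_⟩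
  · rw [← Matrix.mul_assoc, hAY, mul_add, ← Matrix.mul_assoc, ← Matrix.mul_assoc, hEFF,
      add_mul, hFE, hE.isIdempotentElem.eq, add_zero]
  · calc (F * G * Fᵀ + E) * A = F * G * Fᵀ * ((E + F) * A) + E * A := by
          rw [hA, Matrix.add_mul]
      _ = F * A + E * A := by rw [← Matrix.mul_assoc, mul_add, hQE, zero_add, hQF]
      _ = A := by rw [← Matrix.add_mul, add_comm, hA]

theorem Matrix.exists_posDef_of_projections [DecidableEq n] {A : Matrix k n 𝕜}
    {E Q : Matrix k k 𝕜} {C : Matrix n k 𝕜} (hE : IsIdempotentElem E) (hQ : IsIdempotentElem Q)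
    (hQE : Q * E = 0) (hEQ : E * Q = 0) (hAC : A * C = Q + E) :
    ∃ P : Matrix n n 𝕜, P.PosDef ∧
      P * (C * ((2 : 𝕜) • Q + E) * A) = (C * ((2 : 𝕜) • Q + E) * A)ᴴ * P := by
  set T := C * ((2 : 𝕜) • Q + E) * A
  have hQAC : Q * (A * C) = Q := by rw [hAC, mul_add, hQ.eq, hQE, add_zero]
  have hEAC : E * (A * C) = E := by rw [hAC, mul_add, hEQ, hE.eq, zero_add]
  have hQT : C * Q * A * T = (2 : 𝕜) • (C * Q * A) := by
    calc _ = C * (Q * (A * C) * ((2 : 𝕜) • Q + E)) * A := by simp only [T, Matrix.mul_assoc]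
      _ = _ := by
        rw [hQAC, mul_add, mul_smul_comm, hQ.eq, hQE, add_zero, Matrix.mul_smul, Matrix.smul_mul]
  have hET : C * E * A * T = C * E * A := by
    calc _ = C * (E * (A * C) * ((2 : 𝕜) • Q + E)) * A := by simp only [T, Matrix.mul_assoc]
      _ = _ := by rw [hEAC, mul_add, mul_smul_comm, hEQ, hE.eq, smul_zero, zero_add]
  -- the spectral idempotents of `T` for its eigenvalues `0, 1, 2`
  refine exists_posDef_mul_eq_conjTranspose_mul T
    ![1 - C * Q * A - C * E * A, C * E * A, C * Q * A] ![0, 1, 2]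
    (by simp [Fin.sum_univ_three]) fun i ↦ ?_
  fin_cases i
  · change (1 - C * Q * A - C * E * A) * T = ((0 : ℝ) : 𝕜) • (1 - C * Q * A - C * E * A)
    rw [sub_mul, sub_mul, hQT, hET, Matrix.one_mul, RCLike.ofReal_zero, zero_smul]
    simp only [T, Matrix.add_mul, Matrix.mul_add, Matrix.smul_mul, Matrix.mul_smul]
    abel
  · change C * E * A * T = ((1 : ℝ) : 𝕜) • (C * E * A)
    rw [hET, RCLike.ofReal_one, one_smul]
  · change C * Q * A * T = ((2 : ℝ) : 𝕜) • (C * Q * A)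
    rw [hQT, RCLike.ofReal_ofNat]

theorem Matrix.two_smul_add_mul_transpose_eq {A : Matrix k n 𝕜} {E Q : Matrix k k 𝕜}
    {C : Matrix n k 𝕜} (hE : IsStarProjection E) (hQ : IsIdempotentElem Q) (hQt : Qᵀ = Q)
    (hQE : Q * E = 0) (hEQ : E * Q = 0) (hAtE : Aᵀ * E = 0) (hAC : A * C = Q + E) :
    ((2 : 𝕜) • Q + E) * ((2 : 𝕜) • Q + E)ᵀ = (4 : 𝕜) • Q := by
  have hE2 : E * E = E := hE.isIdempotentElem.eq
  -- the radical is isotropic: `E = A * C * E` and `Aᵀ * E = 0`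
  have hEtE : Eᵀ * E = 0 := by
    calc Eᵀ * E = (Aᵀ * E)ᵀ * C * E := by
          rw [transpose_mul, transpose_transpose, Matrix.mul_assoc _ A, hAC, Matrix.mul_assoc,
            add_mul, hQE, hE2, zero_add]
      _ = 0 := by rw [hAtE, transpose_zero, Matrix.zero_mul, Matrix.zero_mul]
  have hEh : Eᴴ = E := hE.isSelfAdjoint.star_eq
  have hEEt : E * Eᵀ = 0 := by
    simpa [conjTranspose_mul, conjTranspose_transpose_eq_transpose_conjTranspose, hEh]
      using congrArg conjTranspose hEtE
  have hQEt : Q * Eᵀ = 0 := by simpa [transpose_mul, hQt] using congrArg transpose hEQ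
  rw [transpose_add, transpose_smul, hQt]
  simp only [add_mul, mul_add, smul_mul_assoc, mul_smul_comm, hQ.eq, hQEt, hEQ, hEEt]
  module

theorem key_lemma_of_projections [DecidableEq n] {A : Matrix k n 𝕜} {E Q : Matrix k k 𝕜}
    {C : Matrix n k 𝕜} (hE : IsStarProjection E) (hQ : IsIdempotentElem Q) (hQt : Qᵀ = Q)
    (hQE : Q * E = 0) (hEQ : E * Q = 0) (hAtE : Aᵀ * E = 0) (hAC : A * C = Q + E)
    (hA : (Q + E) * A = A) :
    ∃ (B : Matrix n k 𝕜) (P : Matrix n n 𝕜), P.PosDef ∧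
      (2 : 𝕜) • A = (2 : 𝕜) • (A * B * A) - (A * B)ᵀ * A ∧
      (2 : 𝕜) • B = (2 : 𝕜) • (B * A * B) - B * (A * B)ᵀ ∧
      P * (B * A) = (B * A)ᴴ * P ∧
      (A * B - (A * B)ᵀ)ᴴ = A * B - (A * B)ᵀ := by
  have hE2 : E * E = E := hE.isIdempotentElem.eq
  have hEh : Eᴴ = E := hE.isSelfAdjoint.star_eq
  have hEtA : Eᵀ * A = 0 := by simpa [transpose_mul] using congrArg transpose hAtE
  set S := (2 : 𝕜) • Q + E with hS
  have hSt : Sᵀ = (2 : 𝕜) • Q + Eᵀ := by rw [hS, transpose_add, transpose_smul, hQt]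
  have hACS : A * C * S = S := by
    rw [hAC, hS]
    simp only [add_mul, mul_add, mul_smul_comm, hQ.eq, hQE, hEQ, hE2]
    module
  have hSS : S * S = (4 : 𝕜) • Q + E := by
    rw [hS]
    simp only [add_mul, mul_add, smul_mul_assoc, mul_smul_comm, hQ.eq, hQE, hEQ, hE2]
    module
  have hSSt : S * Sᵀ = (4 : 𝕜) • Q :=
    two_smul_add_mul_transpose_eq hE hQ hQt hQE hEQ hAtE hAC
  have hAB : A * (C * S) = S := by rw [← Matrix.mul_assoc, hACS]
  obtain ⟨P, hP, hPT⟩ := exists_posDef_of_projections hE.isIdempotentElem hQ hQE hEQ hAC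
  refine ⟨C * S, P, hP, ?_, ?_, ?_, ?_⟩
  · rw [hAB, hSt, hS]
    rw [Matrix.add_mul] at hA
    simp only [Matrix.add_mul, Matrix.smul_mul, hEtA]
    linear_combination (norm := module) (-2 : 𝕜) • hA
  · rw [hAB]
    simp only [Matrix.mul_assoc]
    rw [← Matrix.mul_assoc A C S, hACS, hSS, hSSt, hS]
    simp only [Matrix.mul_add, Matrix.mul_smul]
    module
  · simpa only [Matrix.mul_assoc] using hPT
  · rw [hAB, hSt, hS, conjTranspose_sub]
    simp [conjTranspose_transpose_eq_transpose_conjTranspose, hEh]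

end

/-- Key lemma, orthogonal case: for every complex `k × n` matrix `A` (a linear map
`ℂⁿ → ℂᵏ`, where `ℂᵏ` carries the standard symmetric bilinear form `ω(x,y) = xᵀy` and the
standard Hermitian form) there exist `B : ℂᵏ → ℂⁿ` and a Hermitian inner product on `ℂⁿ`
(given by a positive-definite Hermitian matrix `P`) such that
`2A = 2ABA − (AB)ᵀA`, `2B = 2BAB − B(AB)ᵀ`, `BA` is Hermitian for `P`,
and `AB − (AB)ᵀ` is Hermitian for the standard form. -/
theorem key_lemma_orthogonal (k n : ℕ) (A : Matrix (Fin k) (Fin n) ℂ) :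
    ∃ (B : Matrix (Fin n) (Fin k) ℂ) (P : Matrix (Fin n) (Fin n) ℂ),
      P.PosDef ∧
      (2 : ℂ) • A = (2 : ℂ) • (A * B * A) - (A * B)ᵀ * A ∧
      (2 : ℂ) • B = (2 : ℂ) • (B * A * B) - B * (A * B)ᵀ ∧
      P * (B * A) = (B * A)ᴴ * P ∧
      (A * B - (A * B)ᵀ)ᴴ = A * B - (A * B)ᵀ := by
  obtain ⟨E, F, Y, hE, hF, hEF, hAtE, hAY, hA, hnd⟩ := exists_radical_decomposition A
  obtain ⟨Q, C, hQ, hQt, hQE, hEQ, hAC, hQA⟩ :=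
    exists_symmetric_projection_of_radical_decomposition hE hF hEF hAtE hAY hA hnd
  exact key_lemma_of_projections hE hQ hQt hQE hEQ hAtE hAC hQA
end

section
/- Let V be a finite-dimensional complex vector space, let 𝒬 be a set of quadratic forms on V, and let C = {v ∈ V | q(v) = 0 for all q ∈ 𝒬} be their common zero cone. If both linear maps A : ℂ² → V and B : ℂ² → V are degenerate, then there exists a linear map E : ℂ² → ℂ² such that A + B ∘ E is not degenerate. -/
/-!
If `range A` and `range B` meet nontrivially, some `E` makes `A + B ∘ E` non-injective. Otherwise
every plane in `range A ⊕ range B` complementary to `range B` is the range of some `A + B ∘ E`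
(a graph over `range A`), so if all of these are degenerate, every such plane meets the cone `C`
in a line. Write `C ∩ range A = ℂ a`. The plane through `a` and a point `v` of `C` shows
`v ∈ ℂ a + range B`; applied to the plane through `a + b` and some `a' ∈ range A \ ℂ a`, this
forces `a + b ∈ C` for every `b ∈ range B`. As `C` is cut out by quadrics, `q a = q (a ± b) = 0`
gives `q b = 0`, so `range B ⊆ C`, contradicting that `C ∩ range B` is a line.
-/

/-- A linear map `A : ℂ² → V` is degenerate (with respect to a cone `C ⊆ V`) if its range is
`2`-dimensional and `C ∩ range A` is a line, i.e. the projectivization of the range of `A`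
meets the projective variety in exactly one point. -/
def Degenerate {V : Type*} [AddCommGroup V] [Module ℂ V] (C : Set V)
    (A : (Fin 2 → ℂ) →ₗ[ℂ] V) : Prop :=
  Module.finrank ℂ (LinearMap.range A) = 2 ∧
  ∃ L : Submodule ℂ V, Module.finrank ℂ L = 1 ∧
    C ∩ (LinearMap.range A : Set V) = (L : Set V)

open Module Submodule LinearMap

section Lines

variable {K V : Type*} [Field K] [AddCommGroup V] [Module K V]

def MeetsInLine (C : Set V) (W : Submodule K V) : Prop :=
  ∃ L : Submodule K V, finrank K L = 1 ∧ C ∩ (W : Set V) = L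

variable {C : Set V} {W : Submodule K V}

theorem MeetsInLine.exists_ne_zero (h : MeetsInLine C W) : ∃ u ∈ C ∩ (W : Set V), u ≠ 0 := by
  obtain ⟨L, hL, hCW⟩ := h
  obtain ⟨⟨u, huL⟩, hu, -⟩ := finrank_eq_one_iff'.1 hL
  exact ⟨u, hCW ▸ huL, by simpa using hu⟩

theorem MeetsInLine.mem_span_singleton (h : MeetsInLine C W) {u v : V}
    (hu : u ∈ C ∩ (W : Set V)) (hu0 : u ≠ 0) (hv : v ∈ C ∩ (W : Set V)) : v ∈ K ∙ u := by
  obtain ⟨L, hL, hCW⟩ := h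
  rw [hCW] at hu hv
  obtain ⟨c, hc⟩ := (finrank_eq_one_iff_of_nonzero' (⟨u, hu⟩ : L) (by simpa using hu0)).1 hL ⟨v, hv⟩
  exact Submodule.mem_span_singleton.2 ⟨c, congrArg Subtype.val hc⟩

theorem MeetsInLine.smul_mem (h : MeetsInLine C W) {u : V} (hu : u ∈ C ∩ (W : Set V)) (c : K) :
    c • u ∈ C ∩ (W : Set V) := by
  obtain ⟨L, -, hCW⟩ := h
  rw [hCW] at hu ⊢
  exact L.smul_mem c hu

theorem MeetsInLine.finrank_eq_one_of_subset (h : MeetsInLine C W) (hW : (W : Set V) ⊆ C) :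
    finrank K W = 1 := by
  obtain ⟨L, hL, hCW⟩ := h
  rw [Set.inter_eq_right.2 hW, SetLike.coe_set_eq] at hCW
  rwa [hCW]

end Lines

section Perturbation

variable {K M V : Type*} [Field K] [AddCommGroup M] [Module K M] [AddCommGroup V] [Module K V]

theorem exists_not_injective_add_comp {A B : M →ₗ[K] V} (h : ¬ Disjoint (range A) (range B)) :
    ∃ E : M →ₗ[K] M, ¬ Function.Injective (A + B ∘ₗ E) := by
  obtain ⟨w, ⟨⟨x, rfl⟩, ⟨y, hy⟩⟩, hw⟩ := exists_mem_ne_zero_of_ne_bot (disjoint_iff.not.1 h)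
  have hx : x ≠ 0 := by rintro rfl; exact hw (map_zero A)
  obtain ⟨φ, hφ⟩ := Projective.exists_dual_eq_one K hx
  refine ⟨φ.smulRight (-y), fun hinj => hx (hinj ?_)⟩
  simp [hφ, hy]

theorem exists_range_add_comp_eq [FiniteDimensional K M] (A B : M →ₗ[K] V) {W : Submodule K V}
    (hW : W ≤ range A ⊔ range B) (hWB : Disjoint W (range B)) (hrank : finrank K W = finrank K M) :
    ∃ E : M →ₗ[K] M, range (A + B ∘ₗ E) = W := by
  have : FiniteDimensional K W := Submodule.finiteDimensional_of_le hW
  -- Lift `W` along `(x, y) ↦ A x + B y`; as `W ∩ range B = 0`, the `x`-component is an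
  -- isomorphism `W ≃ M`, and `E` is the `y`-component read through it.
  obtain ⟨σ, hσ⟩ := (A.coprod B).rangeRestrict.exists_rightInverse_of_surjective
    (range_rangeRestrict _)
  have hWP : W ≤ range (A.coprod B) := range_coprod A B ▸ hW
  let g := σ ∘ₗ Submodule.inclusion hWP
  have hg (w : W) : A (g w).1 + B (g w).2 = w :=
    congrArg Subtype.val (LinearMap.congr_fun hσ (Submodule.inclusion hWP w))
  have hinj : Function.Injective (fst K M M ∘ₗ g) := by
    rw [← ker_eq_bot, eq_bot_iff]
    intro w hw
    have hwB : (w : V) ∈ range B := by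
      rw [← hg w, show (g w).1 = 0 from hw, map_zero, zero_add]
      exact mem_range_self B _
    simpa using hWB.le_bot ⟨w.2, hwB⟩
  let e := linearEquivOfInjective _ hinj hrank
  refine ⟨snd K M M ∘ₗ g ∘ₗ e.symm, ?_⟩
  have : A + B ∘ₗ (snd K M M ∘ₗ g ∘ₗ e.symm) = W.subtype ∘ₗ e.symm := by
    ext m
    have hm : (g (e.symm m)).1 = m := e.apply_symm_apply m
    simpa [hm] using hg (e.symm m)
  rw [this, range_comp_of_range_eq_top _ e.symm.range, range_subtype]

end Perturbation

section Planes

variable {K V : Type*} [Field K] [AddCommGroup V] [Module K V] {C : Set V} {S T U : Submodule K V}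

-- `span {u, v}` ranges over the planes in `U` meeting `T` only in `0`.
def PlanesMeetInLines (C : Set V) (U T : Submodule K V) : Prop :=
  ∀ u ∈ U, ∀ v ∈ U, LinearIndependent K ![T.mkQ u, T.mkQ v] → MeetsInLine C (span K {u, v})

theorem PlanesMeetInLines.mkQ_mem_span_singleton (hC : PlanesMeetInLines C U T) {a v : V}
    (haC : a ∈ C) (haU : a ∈ U) (haT : a ∉ T) (hvC : v ∈ C) (hvU : v ∈ U) :
    T.mkQ v ∈ K ∙ T.mkQ a := by
  by_contra hv
  have hind : LinearIndependent K ![T.mkQ v, T.mkQ a] :=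
    linearIndependent_fin2.2 ⟨by simpa using haT, fun c hc => hv (mem_span_singleton.2 ⟨c, hc⟩)⟩
  have ha0 : a ≠ 0 := by rintro rfl; exact haT T.zero_mem
  obtain ⟨c, rfl⟩ := mem_span_singleton.1 <| (hC v hvU a haU hind).mem_span_singleton
    ⟨haC, subset_span (by simp)⟩ ha0 ⟨hvC, subset_span (by simp)⟩
  exact hv (mem_span_singleton.2 ⟨c, by simp⟩)

theorem PlanesMeetInLines.mem_of_sub_mem (hC : PlanesMeetInLines C U T) {a a' p : V}
    (haC : a ∈ C) (haU : a ∈ U) (ha'U : a' ∈ U) (hind : LinearIndependent K ![T.mkQ a', T.mkQ a])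
    (hpU : p ∈ U) (hpa : p - a ∈ T) : p ∈ C := by
  have hpq : T.mkQ p = T.mkQ a := (Submodule.Quotient.eq T).2 hpa
  have hline := hC a' ha'U p hpU (hpq ▸ hind)
  obtain ⟨u, hu, hu0⟩ := hline.exists_ne_zero
  obtain ⟨s, t, rfl⟩ := mem_span_pair.1 hu.2
  have haT : a ∉ T := by simpa using hind.ne_zero 1
  have huU : s • a' + t • p ∈ U := U.add_mem (U.smul_mem s ha'U) (U.smul_mem t hpU)
  obtain ⟨c, hc⟩ := mem_span_singleton.1 (hC.mkQ_mem_span_singleton haC haU haT hu.1 huU)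
  obtain ⟨rfl, -⟩ : s = 0 ∧ t - c = 0 := LinearIndependent.pair_iff.1 hind s (t - c) <| by
    rw [sub_smul, hc, ← hpq]; simp
  rw [zero_smul, zero_add] at hu hu0
  have ht : t ≠ 0 := left_ne_zero_of_smul hu0
  simpa [smul_smul, ht] using (hline.smul_mem hu t⁻¹).1

theorem PlanesMeetInLines.add_mem (hC : PlanesMeetInLines C (S ⊔ T) T) (hST : Disjoint S T)
    (hS : finrank K S = 2) {a b : V} (haC : a ∈ C) (haS : a ∈ S) (ha0 : a ≠ 0) (hb : b ∈ T) :
    a + b ∈ C := by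
  obtain ⟨a', ha'S, ha'⟩ : ∃ a' ∈ S, a' ∉ K ∙ a := by
    by_contra! h
    have := Submodule.finrank_mono (show S ≤ K ∙ a from h)
    rw [finrank_span_singleton ha0] at this
    omega
  have hli : LinearIndependent K ![a', a] :=
    linearIndependent_fin2.2 ⟨ha0, fun c hc => ha' (mem_span_singleton.2 ⟨c, hc⟩)⟩
  have hind : LinearIndependent K ![T.mkQ a', T.mkQ a] := by
    have hdisj : Disjoint (span K (Set.range ![a', a])) (ker T.mkQ) := by
      rw [ker_mkQ, Matrix.range_cons_cons_empty]
      exact hST.mono_left (span_le.2 (by simp [Set.insert_subset_iff, ha'S, haS]))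
    have hcomp : T.mkQ ∘ ![a', a] = ![T.mkQ a', T.mkQ a] := (FinVec.map_eq _ _).symm
    exact hcomp ▸ hli.map hdisj
  exact hC.mem_of_sub_mem haC (mem_sup_left haS) (mem_sup_left ha'S) hind
    (Submodule.add_mem _ (mem_sup_left haS) (mem_sup_right hb)) (by simpa using hb)

end Planes

theorem QuadraticMap.map_add_add_map_sub {R M N : Type*} [CommRing R] [AddCommGroup M]
    [Module R M] [AddCommGroup N] [Module R N] (Q : QuadraticMap R M N) (x y : M) :
    Q (x + y) + Q (x - y) = 2 • (Q x + Q y) := by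
  have h := Q.polar_neg_right x y
  rw [polar, polar, QuadraticMap.map_neg, ← sub_eq_add_neg] at h
  rw [two_nsmul]
  calc Q (x + y) + Q (x - y) = Q (x + y) + (Q (x - y) - Q x - Q y) + Q x + Q y := by abel
    _ = Q x + Q y + (Q x + Q y) := by rw [h]; abel

theorem mem_zeroLocus_of_add_of_sub {K V : Type*} [Field K] [NeZero (2 : K)] [AddCommGroup V]
    [Module K V] {𝒬 : Set (QuadraticForm K V)} {a b : V} (ha : ∀ q ∈ 𝒬, q a = 0)
    (hadd : ∀ q ∈ 𝒬, q (a + b) = 0) (hsub : ∀ q ∈ 𝒬, q (a - b) = 0) : ∀ q ∈ 𝒬, q b = 0 := by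
  intro q hq
  have h := q.map_add_add_map_sub a b
  rw [hadd q hq, hsub q hq, ha q hq, add_zero, zero_add, nsmul_eq_mul] at h
  exact (mul_eq_zero.1 h.symm).resolve_left (by exact_mod_cast two_ne_zero)

section Degenerate

variable {V : Type*} [AddCommGroup V] [Module ℂ V] {C : Set V}

theorem Degenerate.injective {A : (Fin 2 → ℂ) →ₗ[ℂ] V} (h : Degenerate C A) :
    Function.Injective A := by
  have hrank := A.finrank_range_add_finrank_ker
  rw [h.1, finrank_fin_fun] at hrank
  rw [← ker_eq_bot, ← Submodule.finrank_eq_zero]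
  omega

theorem planesMeetInLines_of_forall_degenerate {A B : (Fin 2 → ℂ) →ₗ[ℂ] V}
    (h : ∀ E, Degenerate C (A + B ∘ₗ E)) :
    PlanesMeetInLines C (range A ⊔ range B) (range B) := by
  intro u hu v hv hquot
  have hind : LinearIndependent ℂ ((range B).mkQ ∘ ![u, v]) := by rw [← FinVec.map_eq]; exact hquot
  have hW : span ℂ {u, v} ≤ range A ⊔ range B := span_le.2 (Set.insert_subset hu (by simpa))
  have hdisj := Submodule.range_ker_disjoint hind
  rw [ker_mkQ, Matrix.range_cons_cons_empty] at hdisj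
  have hrank : finrank ℂ (span ℂ {u, v}) = finrank ℂ (Fin 2 → ℂ) := by
    rw [← Matrix.range_cons_cons_empty, finrank_span_eq_card (hind.of_comp _)]
    simp
  obtain ⟨E, hE⟩ := exists_range_add_comp_eq A B hW hdisj hrank
  exact hE ▸ (h E).2

end Degenerate

theorem degenerate_perturb_degenerate_general {V : Type*} [AddCommGroup V] [Module ℂ V]
    (𝒬 : Set (QuadraticForm ℂ V))
    (A B : (Fin 2 → ℂ) →ₗ[ℂ] V)
    (hA : Degenerate {v : V | ∀ q ∈ 𝒬, q v = 0} A)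
    (hB : Degenerate {v : V | ∀ q ∈ 𝒬, q v = 0} B) :
    ∃ E : (Fin 2 → ℂ) →ₗ[ℂ] (Fin 2 → ℂ),
      ¬ Degenerate {v : V | ∀ q ∈ 𝒬, q v = 0} (A + B ∘ₗ E) := by
  by_cases hAB : Disjoint (range A) (range B)
  · by_contra! hE
    have hC := planesMeetInLines_of_forall_degenerate hE
    obtain ⟨a, ⟨haC, haA⟩, ha0⟩ := MeetsInLine.exists_ne_zero hA.2
    have hBC : (range B : Set V) ⊆ {v : V | ∀ q ∈ 𝒬, q v = 0} := fun b hb =>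
      mem_zeroLocus_of_add_of_sub haC (hC.add_mem hAB hA.1 haC haA ha0 hb)
        (by simpa [sub_eq_add_neg] using hC.add_mem hAB hA.1 haC haA ha0 (neg_mem hb))
    have h1 := MeetsInLine.finrank_eq_one_of_subset hB.2 hBC
    rw [hB.1] at h1
    exact absurd h1 (by norm_num)
  · obtain ⟨E, hE⟩ := exists_not_injective_add_comp hAB
    exact ⟨E, fun hD => hE hD.injective⟩

/-- Proposition 1(B): if `A, B : ℂ² → V` are both degenerate with respect to the common zero
cone of a set of quadratic forms, then `A + B ∘ E` is non-degenerate for some `E : ℂ² → ℂ²`. -/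
theorem degenerate_perturb_degenerate {V : Type*} [AddCommGroup V] [Module ℂ V]
    [FiniteDimensional ℂ V] (𝒬 : Set (QuadraticForm ℂ V))
    (A B : (Fin 2 → ℂ) →ₗ[ℂ] V)
    (hA : Degenerate {v : V | ∀ q ∈ 𝒬, q v = 0} A)
    (hB : Degenerate {v : V | ∀ q ∈ 𝒬, q v = 0} B) :
    ∃ E : (Fin 2 → ℂ) →ₗ[ℂ] (Fin 2 → ℂ),
      ¬ Degenerate {v : V | ∀ q ∈ 𝒬, q v = 0} (A + B ∘ₗ E) :=
  degenerate_perturb_degenerate_general 𝒬 A B hA hB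
end

section
/- Let V be a finite-dimensional complex vector space, let 𝒬 be a set of quadratic forms on V, and let C = {v ∈ V | q(v) = 0 for all q ∈ 𝒬} be their common zero cone. If a linear map A : ℂ² → V is degenerate and v ∈ V does not belong to C, then there exists a linear functional f : ℂ² → ℂ such that the linear map x ↦ A(x) + f(x) • v is not degenerate. -/
/-!
If `v ∈ range A`, perturb `A` so that it kills a preimage of `v`; the range drops below dimension `2`.
Otherwise let `C ∩ range A = ℂ u` and suppose every perturbation `A + f ⊗ v` is degenerate. Any
two independent points of `C` in `range A ⊕ ℂ v` then span a plane through `v`, since every plane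
of that space avoiding `v` is the range of a perturbation. Applied to `u` and the point of `C` on
the plane spanned by `u + t v` and a second vector of `range A`, this puts `u + t v` in `C` for
all `t ≠ 0`. Taking `t = ±1`, the parallelogram law gives `q v = 0` for every `q ∈ 𝒬`.
-/

open Module Submodule LinearMap

section LinearAlgebra

variable {K M V : Type*} [Field K] [AddCommGroup M] [Module K M] [AddCommGroup V] [Module K V]

theorem LinearIndependent.eq_zero_of_smul_add_smul_add_smul {x y z : V}
    (h : LinearIndependent K ![x, y, z]) {a b c : K} (habc : a • x + b • y + c • z = 0) :
    a = 0 ∧ b = 0 ∧ c = 0 := by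
  have := Fintype.linearIndependent_iff.mp h ![a, b, c] (by simpa [Fin.sum_univ_three] using habc)
  exact ⟨this 0, this 1, this 2⟩

theorem LinearIndependent.pair_of_add_smul {v y₁ y₂ : V} {t₁ t₂ : K}
    (h : LinearIndependent K ![y₁ + t₁ • v, y₂ + t₂ • v])
    (hv : v ∉ span K {y₁ + t₁ • v, y₂ + t₂ • v}) : LinearIndependent K ![y₁, y₂] := by
  have hind : LinearIndependent K ![v, y₁ + t₁ • v, y₂ + t₂ • v] :=
    linearIndependent_finCons.mpr ⟨h, by rwa [Matrix.range_cons_cons_empty]⟩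
  refine LinearIndependent.pair_iff.mpr fun s c hsc => ?_
  exact (hind.eq_zero_of_smul_add_smul_add_smul (a := -(s * t₁ + c * t₂)) (b := s) (c := c)
    (by linear_combination (norm := module) hsc)).2

/-- The preimages of `y₁, y₂` form a basis of `M`, on which `f` can be prescribed. -/
theorem exists_range_add_smulRight_eq_span_pair [FiniteDimensional K M] (hM : finrank K M = 2)
    (A : M →ₗ[K] V) (v : V) {y₁ y₂ : V} (hy₁ : y₁ ∈ range A) (hy₂ : y₂ ∈ range A)
    (hy : LinearIndependent K ![y₁, y₂]) (t₁ t₂ : K) :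
    ∃ f : M →ₗ[K] K, range (A + f.smulRight v) = span K {y₁ + t₁ • v, y₂ + t₂ • v} := by
  obtain ⟨w₁, rfl⟩ := hy₁
  obtain ⟨w₂, rfl⟩ := hy₂
  have hw : LinearIndependent K ![w₁, w₂] :=
    LinearIndependent.of_comp A (by convert hy using 1; ext i; fin_cases i <;> rfl)
  let b := basisOfLinearIndependentOfCardEqFinrank hw (by simp [hM])
  refine ⟨b.constr K ![t₁, t₂], ?_⟩
  rw [range_eq_map, ← b.span_eq, Submodule.map_span, ← Set.range_comp,
    ← Matrix.range_cons_cons_empty _ _ ![]]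
  congr 2
  ext i
  have hb : b i = ![w₁, w₂] i := by simp [b, coe_basisOfLinearIndependentOfCardEqFinrank]
  rw [Function.comp_apply, LinearMap.add_apply, smulRight_apply, b.constr_basis, hb]
  fin_cases i <;> rfl

theorem exists_finrank_range_add_smulRight_lt [FiniteDimensional K M] (A : M →ₗ[K] V) {v : V}
    (hv : v ∈ range A) (hv0 : v ≠ 0) :
    ∃ f : M →ₗ[K] K, finrank K (range (A + f.smulRight v)) < finrank K M := by
  obtain ⟨w, rfl⟩ := hv
  have hw : w ≠ 0 := by rintro rfl; exact hv0 (map_zero A)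
  obtain ⟨f, hf⟩ := Projective.exists_dual_eq_one K hw
  refine ⟨-f, ?_⟩
  have hker : ker (A + (-f).smulRight (A w)) ≠ ⊥ := fun h => hw <| by
    simpa [h] using (show w ∈ ker (A + (-f).smulRight (A w)) by simp [hf])
  have := finrank_range_add_finrank_ker (A + (-f).smulRight (A w))
  have := mt Submodule.finrank_eq_zero.mp hker
  omega

end LinearAlgebra

theorem QuadraticMap.eq_zero_of_map_add_eq_zero_of_map_sub_eq_zero {R V : Type*} [CommRing R]
    [IsDomain R] [NeZero (2 : R)] [AddCommGroup V] [Module R V] (q : QuadraticForm R V) {u v : V}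
    (hu : q u = 0) (hadd : q (u + v) = 0) (hsub : q (u - v) = 0) : q v = 0 := by
  have h₁ : q (u + v) = polar q u v + q u + q v := by rw [polar]; ring
  have h₂ : q (u - v) = -polar q u v + q u + q v := by
    rw [← polar_neg_right, polar, QuadraticMap.map_neg, sub_eq_add_neg]; ring
  have h : 2 * q v = 0 := by linear_combination hadd + hsub - h₁ - h₂ - 2 * hu
  exact (mul_eq_zero.mp h).resolve_left two_ne_zero

section Degenerate

variable {V : Type*} [AddCommGroup V] [Module ℂ V] {C : Set V} {B : (Fin 2 → ℂ) →ₗ[ℂ] V}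

theorem Degenerate.exists_ne_zero (h : Degenerate C B) : ∃ x ∈ C, x ∈ range B ∧ x ≠ 0 := by
  obtain ⟨-, L, hL, hCL⟩ := h
  obtain ⟨x, hxL, hx0⟩ := L.exists_mem_ne_zero_of_ne_bot (by rintro rfl; simp at hL)
  have hx : x ∈ C ∩ (range B : Set V) := hCL ▸ hxL
  exact ⟨x, hx.1, hx.2, hx0⟩

theorem Degenerate.not_linearIndependent (h : Degenerate C B) {x y : V} (hx : x ∈ C)
    (hxB : x ∈ range B) (hy : y ∈ C) (hyB : y ∈ range B) : ¬LinearIndependent ℂ ![x, y] := by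
  obtain ⟨-, L, hL, hCL⟩ := h
  intro hxy
  have : Module.Finite ℂ L := Module.finite_of_finrank_eq_succ hL
  have hle : span ℂ {x, y} ≤ L := by
    rw [span_le, ← hCL]
    rintro z (rfl | rfl)
    exacts [⟨hx, hxB⟩, ⟨hy, hyB⟩]
  have h2 : finrank ℂ (span ℂ {x, y}) = 2 := by
    rw [← Matrix.range_cons_cons_empty x y ![], finrank_span_eq_card hxy, Fintype.card_fin]
  have := Submodule.finrank_mono hle
  omega

theorem Degenerate.exists_linearIndependent_pair (h : Degenerate C B) :
    ∃ u ∈ C, u ∈ range B ∧ ∃ p ∈ range B, LinearIndependent ℂ ![u, p] := by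
  obtain ⟨u, huC, huB, hu0⟩ := h.exists_ne_zero
  have hlt : span ℂ {u} < range B := by
    refine lt_of_le_of_ne (span_le.mpr (Set.singleton_subset_iff.mpr huB)) fun heq => ?_
    have := h.1
    rw [← heq, finrank_span_singleton hu0] at this
    omega
  obtain ⟨p, hpB, hpu⟩ := SetLike.exists_of_lt hlt
  refine ⟨u, huC, huB, p, hpB, (LinearIndependent.pair_iff' hu0).mpr fun a hp => hpu ?_⟩
  exact hp ▸ mem_span_singleton.mpr ⟨a, rfl⟩

end Degenerate

section ForallDegenerate

variable {V : Type*} [AddCommGroup V] [Module ℂ V] {C : Set V} {A : (Fin 2 → ℂ) →ₗ[ℂ] V} {v : V}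

theorem mem_span_pair_of_forall_degenerate
    (H : ∀ f : (Fin 2 → ℂ) →ₗ[ℂ] ℂ, Degenerate C (A + f.smulRight v))
    {y₁ y₂ : V} (hy₁ : y₁ ∈ range A) (hy₂ : y₂ ∈ range A) {t₁ t₂ : ℂ}
    (hx₁ : y₁ + t₁ • v ∈ C) (hx₂ : y₂ + t₂ • v ∈ C)
    (hx : LinearIndependent ℂ ![y₁ + t₁ • v, y₂ + t₂ • v]) :
    v ∈ span ℂ {y₁ + t₁ • v, y₂ + t₂ • v} := by
  by_contra hv
  obtain ⟨f, hf⟩ := exists_range_add_smulRight_eq_span_pair (by simp) A v hy₁ hy₂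
    (hx.pair_of_add_smul hv) t₁ t₂
  exact (H f).not_linearIndependent hx₁ (hf ▸ subset_span (by simp)) hx₂
    (hf ▸ subset_span (by simp)) hx

/-- The plane spanned by `u + t v` and `p` meets `C` in some `x ≠ 0`; as `u` and `x` are
independent, the plane they span passes through `v`, which forces `x ∈ ℂ (u + t v)`. -/
theorem add_smul_mem_of_forall_degenerate (hC : ∀ (c : ℂ) (x : V), x ∈ C → c • x ∈ C)
    (H : ∀ f : (Fin 2 → ℂ) →ₗ[ℂ] ℂ, Degenerate C (A + f.smulRight v))
    {u p : V} (huA : u ∈ range A) (hpA : p ∈ range A) (huC : u ∈ C)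
    (hind : LinearIndependent ℂ ![v, u, p]) {t : ℂ} (ht : t ≠ 0) : u + t • v ∈ C := by
  obtain ⟨f, hf⟩ := exists_range_add_smulRight_eq_span_pair (by simp) A v huA hpA
    (linearIndependent_finCons.mp hind).1 t 0
  obtain ⟨x, hxC, hxB, hx0⟩ := (H f).exists_ne_zero
  rw [hf, zero_smul, add_zero] at hxB
  obtain ⟨b, a, rfl⟩ := mem_span_pair.mp hxB
  have hux : LinearIndependent ℂ ![u + (0 : ℂ) • v, (b • u + a • p) + (b * t) • v] := by
    refine LinearIndependent.pair_iff.mpr fun s c hsc => ?_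
    obtain ⟨hcbt, hs, hca⟩ := hind.eq_zero_of_smul_add_smul_add_smul
      (a := c * b * t) (b := s + c * b) (c := c * a) (by linear_combination (norm := module) hsc)
    have hc : c = 0 := by
      by_contra hc
      have hb : b = 0 := by simpa [hc, ht] using hcbt
      have ha : a = 0 := by simpa [hc] using hca
      exact hx0 (by simp [ha, hb])
    exact ⟨by simpa [hc] using hs, hc⟩
  obtain ⟨α, β, hv⟩ := mem_span_pair.mp <| mem_span_pair_of_forall_degenerate H huA
    (add_mem (smul_mem _ _ huA) (smul_mem _ _ hpA)) (by simpa using huC)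
    (by convert hxC using 1; module) hux
  obtain ⟨hβbt, -, hβa⟩ := hind.eq_zero_of_smul_add_smul_add_smul
    (a := β * b * t - 1) (b := α + β * b) (c := β * a) (by linear_combination (norm := module) hv)
  have hb : b ≠ 0 := by rintro rfl; simp at hβbt
  have ha : a = 0 := by
    refine (mul_eq_zero.mp hβa).resolve_left ?_
    rintro rfl; simp at hβbt
  convert hC b⁻¹ _ hxC using 1
  rw [ha, zero_smul, add_zero, smul_smul, inv_mul_cancel₀ hb, one_smul]

end ForallDegenerate

theorem degenerate_perturb_vector_general {V : Type*} [AddCommGroup V] [Module ℂ V]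
    (𝒬 : Set (QuadraticForm ℂ V))
    (A : (Fin 2 → ℂ) →ₗ[ℂ] V) (v : V)
    (hA : Degenerate {v : V | ∀ q ∈ 𝒬, q v = 0} A)
    (hv : v ∉ {v : V | ∀ q ∈ 𝒬, q v = 0}) :
    ∃ f : (Fin 2 → ℂ) →ₗ[ℂ] ℂ,
      ¬ Degenerate {v : V | ∀ q ∈ 𝒬, q v = 0} (A + f.smulRight v) := by
  by_contra! H
  by_cases hvA : v ∈ range A
  · have hv0 : v ≠ 0 := by rintro rfl; exact hv fun q _ => q.map_zero
    obtain ⟨f, hf⟩ := exists_finrank_range_add_smulRight_lt A hvA hv0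
    rw [(H f).1, finrank_fin_fun] at hf
    exact lt_irrefl _ hf
  obtain ⟨u, huC, huA, p, hpA, hup⟩ := hA.exists_linearIndependent_pair
  have hind : LinearIndependent ℂ ![v, u, p] :=
    linearIndependent_finCons.mpr ⟨hup, fun h => hvA <| span_le.mpr (by
      rw [Matrix.range_cons_cons_empty, Set.insert_subset_iff, Set.singleton_subset_iff]
      exact ⟨huA, hpA⟩) h⟩
  have hcone (c : ℂ) (x : V) (hx : ∀ q ∈ 𝒬, q x = 0) : ∀ q ∈ 𝒬, q (c • x) = 0 := fun q hq => by
    simp [QuadraticMap.map_smul, hx q hq]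
  have hadd := add_smul_mem_of_forall_degenerate hcone H huA hpA huC hind one_ne_zero
  have hsub :=
    add_smul_mem_of_forall_degenerate hcone H huA hpA huC hind (neg_ne_zero.2 one_ne_zero)
  exact hv fun q hq => q.eq_zero_of_map_add_eq_zero_of_map_sub_eq_zero (huC q hq)
    (by simpa using hadd q hq) (by simpa [sub_eq_add_neg] using hsub q hq)

/-- Proposition 1(C): if `A : ℂ² → V` is degenerate with respect to the common zero cone `C`
of a set of quadratic forms and `v ∈ V` does not belong to `C`, then `x ↦ A x + f x • v` is
non-degenerate for some linear functional `f : ℂ² → ℂ`. -/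
theorem degenerate_perturb_vector {V : Type*} [AddCommGroup V] [Module ℂ V]
    [FiniteDimensional ℂ V] (𝒬 : Set (QuadraticForm ℂ V))
    (A : (Fin 2 → ℂ) →ₗ[ℂ] V) (v : V)
    (hA : Degenerate {v : V | ∀ q ∈ 𝒬, q v = 0} A)
    (hv : v ∉ {v : V | ∀ q ∈ 𝒬, q v = 0}) :
    ∃ f : (Fin 2 → ℂ) →ₗ[ℂ] ℂ,
      ¬ Degenerate {v : V | ∀ q ∈ 𝒬, q v = 0} (A + f.smulRight v) :=
  degenerate_perturb_vector_general 𝒬 A v hA hv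
end

section
/- Let V and W be finite-dimensional complex vector spaces and let ω be a nondegenerate symmetric bilinear form on W. For a linear map A : V → W let i(A) be the rank of A and let j(A) be the dimension of the radical {w ∈ range A | ω(w, w') = 0 for all w' ∈ range A} of the restriction of ω to the range of A. Then two linear maps A, B : V → W lie in the same orbit of GL(V) × O(ω) — that is, there exist a linear automorphism g of V and a linear automorphism h of W satisfying ω(h x, h y) = ω(x, y) for all x, y ∈ W, such that B = h ∘ A ∘ g — if and only if i(A) = i(B) and j(A) = j(B). -/
/-!
Write `S = range A` and `R` for the radical of `ω` on `S`. A complement `T` of `R` in `S` is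
nondegenerate, so over `ℂ` it has an orthonormal basis `y`. A basis `x` of `R` can be completed by
isotropic vectors `z` orthogonal to `y` with `ω (x i) (z j) = δᵢⱼ`; then `span (x, y, z)` is
nondegenerate, so its orthogonal complement is too and has an orthonormal basis `w`. The Gram
matrix of the basis `(x, y, z, w)` of `W` depends only on `dim R`, `dim S` and `dim W`, so sending
the basis built for `range A` to the one built for `range B` is an isometry `h` carrying `range A`
onto `range B`. Finally `h ∘ A` and `B` have the same range, hence differ by an automorphism of `V`.
-/

open Module LinearMap.BilinForm

noncomputable def radicalOn {W : Type*} [AddCommGroup W] [Module ℂ W]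
    (ω : W →ₗ[ℂ] W →ₗ[ℂ] ℂ) (S : Submodule ℂ W) : Submodule ℂ W :=
  S ⊓ ⨅ w' ∈ S, LinearMap.ker (ω.flip w')

/-- On the index type of a family `(x, y, z)`, the involution exchanging `x i` with `z i`. A family
whose Gram matrix is the permutation matrix of this involution consists of hyperbolic pairs
`(x i, z i)` and an orthonormal family `y`, orthogonal to each other. -/
def hyperbolicSwap {ι κ : Type*} : (ι ⊕ κ) ⊕ ι → (ι ⊕ κ) ⊕ ι
  | .inl (.inl i) => .inr i
  | .inl (.inr m) => .inl (.inr m)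
  | .inr i => .inl (.inl i)

lemma hyperbolicSwap_involutive {ι κ : Type*} :
    Function.Involutive (hyperbolicSwap : (ι ⊕ κ) ⊕ ι → (ι ⊕ κ) ⊕ ι) := by
  rintro ((i | m) | i) <;> rfl

namespace LinearMap

variable {K V : Type*} [Field K] [AddCommGroup V] [Module K V]

lemma exists_linearEquiv_ker_prod_range {W : Type*} [AddCommGroup W] [Module K W] (A : V →ₗ[K] W) :
    ∃ e : (A.ker × A.range) ≃ₗ[K] V, ∀ p : A.ker × A.range, A (e p) = p.2 := by
  obtain ⟨C, hC⟩ := Submodule.exists_isCompl A.ker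
  let φ : C ≃ₗ[K] A.range :=
    (Submodule.quotientEquivOfIsCompl _ C hC).symm.trans A.quotKerEquivRange
  have hφ : ∀ c : C, (φ c : W) = A c := fun c => A.quotKerEquivRange_apply_mk c
  refine ⟨((LinearEquiv.refl K _).prodCongr φ.symm).trans
    (Submodule.prodEquivOfIsCompl _ _ hC), fun p => ?_⟩
  simp [Submodule.coe_prodEquivOfIsCompl', ← hφ]

lemma exists_comp_linearEquiv_eq_of_range_eq [FiniteDimensional K V]
    {W : Type*} [AddCommGroup W] [Module K W] {A B : V →ₗ[K] W} (h : A.range = B.range) :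
    ∃ g : V ≃ₗ[K] V, B = A ∘ₗ g := by
  obtain ⟨eA, hA⟩ := exists_linearEquiv_ker_prod_range A
  obtain ⟨eB, hB⟩ := exists_linearEquiv_ker_prod_range B
  have hker : finrank K B.ker = finrank K A.ker := by
    have := A.finrank_range_add_finrank_ker
    have := B.finrank_range_add_finrank_ker
    rw [h] at *
    omega
  refine ⟨eB.symm.trans (((LinearEquiv.ofFinrankEq _ _ hker).prodCongr
    (LinearEquiv.ofEq _ _ h.symm)).trans eA), LinearMap.ext fun v => ?_⟩
  obtain ⟨p, rfl⟩ := eB.surjective v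
  simp [hA, hB]

namespace BilinForm

lemma linearIndependent_of_biorthogonal {ι : Type*} [Fintype ι] [DecidableEq ι]
    (ω : LinearMap.BilinForm K V) {v w : ι → V}
    (h : ∀ i j, ω (w i) (v j) = if i = j then 1 else 0) :
    LinearIndependent K v := by
  rw [Fintype.linearIndependent_iff]
  intro a ha i
  simpa [h] using congrArg (ω (w i)) ha

lemma nondegenerate_restrict_span_of_biorthogonal {ι : Type*} [Fintype ι] [DecidableEq ι]
    {ω : LinearMap.BilinForm K V} (hω : ω.IsRefl) {v w : ι → V}
    (hw : ∀ i, w i ∈ Submodule.span K (Set.range v))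
    (h : ∀ i j, ω (w i) (v j) = if i = j then 1 else 0) :
    (ω.restrict (Submodule.span K (Set.range v))).Nondegenerate := by
  refine nondegenerate_restrict_of_disjoint_orthogonal ω hω (Submodule.disjoint_def.mpr ?_)
  intro m hm hmω
  obtain ⟨a, rfl⟩ := (Submodule.mem_span_range_iff_exists_fun K).mp hm
  have ha : ∀ i, a i = 0 := fun i => by simpa [h] using hmω (w i) (hw i)
  simp [ha]

lemma nondegenerate_restrict_orthogonal [FiniteDimensional K V] {ω : LinearMap.BilinForm K V}
    (hω : ω.IsRefl) (hnd : ω.Nondegenerate) {M : Submodule K V}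
    (hM : (ω.restrict M).Nondegenerate) : (ω.restrict (ω.orthogonal M)).Nondegenerate := by
  refine nondegenerate_restrict_of_disjoint_orthogonal ω hω ?_
  rw [orthogonal_orthogonal hnd hω]
  exact (isCompl_orthogonal_of_restrict_nondegenerate hω hM).disjoint.symm

lemma exists_biorthogonal_family [FiniteDimensional K V] {ι : Type*} [DecidableEq ι]
    {ω : LinearMap.BilinForm K V} (hnd : ω.Nondegenerate) {v : ι → V} (hv : LinearIndependent K v) :
    ∃ w : ι → V, ∀ i j, ω (v i) (w j) = if i = j then 1 else 0 := by
  classical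
  have hs := hv.linearIndepOn_id
  let b := Basis.extend hs
  have hvb : ∀ i, v i ∈ hs.extend (Set.subset_univ _) := fun i => hs.subset_extend _ ⟨i, rfl⟩
  refine ⟨fun j => ω.flip.dualBasis hnd.flip b ⟨v j, hvb j⟩, fun i j => ?_⟩
  have := apply_dualBasis_left hnd.flip b ⟨v j, hvb j⟩ ⟨v i, hvb i⟩
  simpa [b, hv.injective.eq_iff] using this

lemma exists_isotropic_biorthogonal_family [FiniteDimensional K V] [NeZero (2 : K)]
    {ι κ : Type*} [Fintype ι] [DecidableEq ι] [Fintype κ] [DecidableEq κ]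
    {ω : LinearMap.BilinForm K V} (hω : ω.IsSymm) (hnd : ω.Nondegenerate)
    {x : ι → V} (hx : LinearIndependent K x) {y : κ → V}
    (hxx : ∀ i j, ω (x i) (x j) = 0) (hxy : ∀ i m, ω (x i) (y m) = 0)
    (hyy : ∀ m n, ω (y m) (y n) = if m = n then 1 else 0) :
    ∃ z : ι → V, (∀ i j, ω (x i) (z j) = if i = j then 1 else 0) ∧
      (∀ m j, ω (y m) (z j) = 0) ∧ ∀ i j, ω (z i) (z j) = 0 := by
  obtain ⟨z₀, hxz₀⟩ := exists_biorthogonal_family hnd hx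
  set z₁ : ι → V := fun j => z₀ j - ∑ m, ω (y m) (z₀ j) • y m
  have hxz₁ : ∀ i j, ω (x i) (z₁ j) = if i = j then 1 else 0 := by simp [z₁, hxy, hxz₀]
  have hz₁x : ∀ i j, ω (z₁ j) (x i) = if i = j then 1 else 0 := fun i j => by
    rw [← hω.eq, hxz₁]
  have hyz₁ : ∀ m j, ω (y m) (z₁ j) = 0 := by simp [z₁, hyy]
  have hyx : ∀ m i, ω (y m) (x i) = 0 := fun m i => by rw [hω.eq, hxy]
  -- Subtracting `½ ω (z₁ i) (z₁ j)` along `x i` kills the pairings among the `z₁` without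
  -- disturbing those with `x` and `y`, because `x` is isotropic and orthogonal to `y`.
  refine ⟨fun j => z₁ j - (2 : K)⁻¹ • ∑ i, ω (z₁ i) (z₁ j) • x i, fun i j => ?_, fun m j => ?_,
    fun i j => ?_⟩
  · simp [hxx, hxz₁]
  · simp [hyz₁, hyx]
  · simp [hxx, hxz₁, hz₁x, hω.eq (z₁ j) (z₁ i), sub_sub, ← two_mul,
      mul_inv_cancel_left₀ (two_ne_zero (α := K))]

lemma biorthogonal_hyperbolicSwap {ι κ : Type*} [DecidableEq ι] [DecidableEq κ]
    {ω : LinearMap.BilinForm K V} (hω : ω.IsSymm) {x z : ι → V} {y : κ → V}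
    (hxx : ∀ i j, ω (x i) (x j) = 0) (hxy : ∀ i m, ω (x i) (y m) = 0)
    (hyy : ∀ m n, ω (y m) (y n) = if m = n then 1 else 0)
    (hxz : ∀ i j, ω (x i) (z j) = if i = j then 1 else 0)
    (hyz : ∀ m j, ω (y m) (z j) = 0) (hzz : ∀ i j, ω (z i) (z j) = 0) (i j : (ι ⊕ κ) ⊕ ι) :
    ω (Sum.elim (Sum.elim x y) z (hyperbolicSwap i)) (Sum.elim (Sum.elim x y) z j) =
      if i = j then 1 else 0 := by
  have hyx : ∀ m i, ω (y m) (x i) = 0 := fun m i => by rw [hω.eq, hxy]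
  have hzx : ∀ i j, ω (z i) (x j) = if i = j then 1 else 0 := fun i j => by
    rw [hω.eq, hxz]
    exact if_congr eq_comm rfl rfl
  have hzy : ∀ i m, ω (z i) (y m) = 0 := fun i m => by rw [hω.eq, hyz]
  rcases i with (i | m) | i <;> rcases j with (j | n) | j <;>
    simp [hyperbolicSwap, hxx, hxy, hyy, hxz, hyz, hzz, hyx, hzx, hzy]

lemma exists_orthonormal_basis [FiniteDimensional K V] [IsAlgClosed K] [Invertible (2 : K)]
    {ω : LinearMap.BilinForm K V} (hω : ω.IsSymm) (hnd : ω.Nondegenerate) :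
    ∃ b : Basis (Fin (finrank K V)) K V, ∀ i j, ω (b i) (b j) = if i = j then 1 else 0 := by
  obtain ⟨v, hv⟩ := exists_orthogonal_basis (isSymm_iff.mp hω)
  have hvv i : ω (v i) (v i) ≠ 0 := iIsOrtho.not_isOrtho_basis_self_of_nondegenerate hv hnd i
  choose c hc using fun i => IsAlgClosed.exists_eq_mul_self (ω (v i) (v i))
  have hc0 i : c i ≠ 0 := fun h => hvv i (by rw [hc i, h, zero_mul])
  refine ⟨v.unitsSMul fun i => (Units.mk0 (c i) (hc0 i))⁻¹, fun i j => ?_⟩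
  rcases eq_or_ne i j with rfl | hij
  · simp [Basis.unitsSMul_apply, Units.smul_def, hc i, hc0 i]
  · simp [Basis.unitsSMul_apply, hij, hv hij]

lemma exists_orthonormal_family_mem [FiniteDimensional K V] [IsAlgClosed K] [Invertible (2 : K)]
    {ω : LinearMap.BilinForm K V} (hω : ω.IsSymm) {T : Submodule K V}
    (hT : (ω.restrict T).Nondegenerate) {n : ℕ} (hn : finrank K T = n) :
    ∃ y : Fin n → V, (∀ i, y i ∈ T) ∧ ∀ i j, ω (y i) (y j) = if i = j then 1 else 0 := by
  obtain ⟨b, hb⟩ := exists_orthonormal_basis (ω := ω.restrict T) ⟨fun x y => hω.eq x y⟩ hT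
  refine ⟨fun i => b (finCongr hn.symm i), fun i => (b _).2, fun i j => ?_⟩
  simpa using hb (finCongr hn.symm i) (finCongr hn.symm j)

lemma basis_equiv_isometry {ι : Type*} {ω : LinearMap.BilinForm K V} (b b' : Basis ι K V)
    (h : ∀ i j, ω (b i) (b j) = ω (b' i) (b' j)) (x y : V) :
    ω (b.equiv b' (Equiv.refl ι) x) (b.equiv b' (Equiv.refl ι) y) = ω x y := by
  have : ω.compl₁₂ (b.equiv b' (Equiv.refl ι)).toLinearMap (b.equiv b' (Equiv.refl ι)).toLinearMap
      = ω := by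
    refine b.ext fun i => b.ext fun j => ?_
    simp [h]
  exact LinearMap.congr_fun₂ this x y

end BilinForm

end LinearMap

section Complex

variable {W : Type*} [AddCommGroup W] [Module ℂ W] {ω : LinearMap.BilinForm ℂ W}

lemma mem_radicalOn_iff {S : Submodule ℂ W} {x : W} :
    x ∈ radicalOn ω S ↔ x ∈ S ∧ ∀ s ∈ S, ω x s = 0 := by
  simp [radicalOn, Submodule.mem_iInf]

lemma radicalOn_le (S : Submodule ℂ W) : radicalOn ω S ≤ S := inf_le_left

lemma map_radicalOn {h : W ≃ₗ[ℂ] W} (hh : ∀ x y, ω (h x) (h y) = ω x y) (S : Submodule ℂ W) :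
    (radicalOn ω S).map (h : W →ₗ[ℂ] W) = radicalOn ω (S.map (h : W →ₗ[ℂ] W)) := by
  ext v
  obtain ⟨v, rfl⟩ := h.surjective v
  simp only [Submodule.mem_map_equiv, LinearEquiv.symm_apply_apply, mem_radicalOn_iff,
    and_congr_right_iff]
  refine fun _ => ⟨fun H s hs => ?_, fun H s hs => ?_⟩
  · rw [← h.apply_symm_apply s, hh]
    exact H _ hs
  · rw [← hh]
    exact H _ (by simpa using hs)

variable [FiniteDimensional ℂ W]

lemma finrank_radicalOn_add_finrank_le (hω : ω.IsRefl) (hnd : ω.Nondegenerate)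
    (S : Submodule ℂ W) : finrank ℂ (radicalOn ω S) + finrank ℂ S ≤ finrank ℂ W := by
  have hle : radicalOn ω S ≤ ω.orthogonal S := fun v hv s hs =>
    hω _ _ ((mem_radicalOn_iff.mp hv).2 s hs)
  have := Submodule.finrank_mono hle
  rw [finrank_orthogonal hnd] at this
  have := Submodule.finrank_le S
  omega

lemma exists_nondegenerate_compl_radicalOn (hω : ω.IsRefl) (S : Submodule ℂ W) :
    ∃ T ≤ S, finrank ℂ (radicalOn ω S) + finrank ℂ T = finrank ℂ S ∧
      (ω.restrict T).Nondegenerate := by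
  obtain ⟨C, hC⟩ := Submodule.exists_isCompl (radicalOn ω S)
  have hsup : radicalOn ω S ⊔ C ⊓ S = S := by
    rw [← sup_inf_assoc_of_le C (radicalOn_le S), hC.sup_eq_top, top_inf_eq]
  have hinf : radicalOn ω S ⊓ (C ⊓ S) = ⊥ :=
    (hC.disjoint.mono_right inf_le_left).eq_bot
  refine ⟨C ⊓ S, inf_le_right, ?_, ?_⟩
  · have := Submodule.finrank_sup_add_finrank_inf_eq (radicalOn ω S) (C ⊓ S)
    rw [hsup, hinf, finrank_bot] at this
    omega
  refine nondegenerate_restrict_of_disjoint_orthogonal ω hω (Submodule.disjoint_def.mpr ?_)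
  intro v hv hvω
  -- `v` pairs to zero with both the radical and `C ⊓ S`, hence with all of `S`.
  have hvR : v ∈ radicalOn ω S := by
    refine mem_radicalOn_iff.mpr ⟨hv.2, fun s hs => ?_⟩
    rw [← hsup] at hs
    obtain ⟨a, ha, c, hc, rfl⟩ := Submodule.mem_sup.mp hs
    rw [map_add, hω _ _ ((mem_radicalOn_iff.mp ha).2 v hv.2), hω _ _ (hvω c hc), add_zero]
  exact (Submodule.disjoint_def.mp hC.disjoint) v hvR hv.1

/-- Index type of a basis `(x, y, z, w)`: hyperbolic pairs `(x i, z i)`, orthonormal `y` and `w`. -/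
abbrev WittIdx (r t u : ℕ) := ((Fin r ⊕ Fin t) ⊕ Fin r) ⊕ Fin u

lemma exists_wittBasis (hω : ω.IsSymm) (hnd : ω.Nondegenerate) {S : Submodule ℂ W} {r t u : ℕ}
    (hr : finrank ℂ (radicalOn ω S) = r) (ht : finrank ℂ S = r + t)
    (hu : finrank ℂ W = r + t + r + u) :
    ∃ b : Basis (WittIdx r t u) ℂ W,
      (∀ i j, ω (b (Sum.map hyperbolicSwap id i)) (b j) = if i = j then 1 else 0) ∧
      Submodule.span ℂ (Set.range (b ∘ Sum.inl ∘ Sum.inl)) = S := by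
  obtain ⟨T, hTS, hRT, hT⟩ := exists_nondegenerate_compl_radicalOn hω.isRefl S
  let bR := finBasisOfFinrankEq ℂ _ hr
  let x : Fin r → W := fun i => bR i
  have hxS : ∀ i, x i ∈ S := fun i => radicalOn_le S (bR i).2
  have hxω : ∀ i, ∀ s ∈ S, ω (x i) s = 0 := fun i => (mem_radicalOn_iff.mp (bR i).2).2
  have hx : LinearIndependent ℂ x :=
    bR.linearIndependent.map' (radicalOn ω S).subtype (Submodule.ker_subtype _)
  obtain ⟨y, hyT, hyy⟩ := exists_orthonormal_family_mem hω hT (n := t) (by omega)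
  have hxx : ∀ i j, ω (x i) (x j) = 0 := fun i j => hxω i _ (hxS j)
  have hxy : ∀ i m, ω (x i) (y m) = 0 := fun i m => hxω i _ (hTS (hyT m))
  obtain ⟨z, hxz, hyz, hzz⟩ := exists_isotropic_biorthogonal_family hω hnd hx hxx hxy hyy
  set F₀ := Sum.elim (Sum.elim x y) z
  have hF₀ := biorthogonal_hyperbolicSwap hω hxx hxy hyy hxz hyz hzz
  have hF₀M : ∀ i, F₀ i ∈ Submodule.span ℂ (Set.range F₀) :=
    fun i => Submodule.subset_span ⟨i, rfl⟩
  have hM := nondegenerate_restrict_span_of_biorthogonal hω.isRefl (fun i => hF₀M _) hF₀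
  have hMdim : finrank ℂ (Submodule.span ℂ (Set.range F₀)) = r + t + r := by
    rw [finrank_span_eq_card (linearIndependent_of_biorthogonal ω hF₀)]
    simp
  obtain ⟨w, hwM, hww⟩ := exists_orthonormal_family_mem hω
    (nondegenerate_restrict_orthogonal hω.isRefl hnd hM) (n := u)
    (by rw [finrank_orthogonal hnd, hMdim]; omega)
  have hF : ∀ i j, ω (Sum.elim F₀ w (Sum.map hyperbolicSwap id i)) (Sum.elim F₀ w j) =
      if i = j then 1 else 0 := by
    rintro (i | i) (j | j)
    · simpa using hF₀ i j
    · simpa using hwM j _ (hF₀M _)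
    · simpa [hω.eq (w i)] using hwM i _ (hF₀M j)
    · simpa using hww i j
  have hli := linearIndependent_of_biorthogonal ω hF
  let b := basisOfLinearIndependentOfCardEqFinrank' _ hli (by simp only [Fintype.card_sum, Fintype.card_fin]; omega)
  have hb : ⇑b = Sum.elim F₀ w := coe_basisOfLinearIndependentOfCardEqFinrank' _ hli _
  have hbS : ⇑b ∘ Sum.inl ∘ Sum.inl = Sum.elim x y := by
    rw [hb]
    ext (i | m) <;> rfl
  refine ⟨b, by simpa [hb] using hF, ?_⟩
  have hxy_li : LinearIndependent ℂ (Sum.elim x y) :=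
    hbS ▸ b.linearIndependent.comp _ (Sum.inl_injective.comp Sum.inl_injective)
  rw [hbS]
  refine Submodule.eq_of_le_of_finrank_le ?_ ?_
  · rw [Submodule.span_le]
    rintro _ ⟨(i | m), rfl⟩
    exacts [hxS i, hTS (hyT m)]
  · rw [finrank_span_eq_card hxy_li]
    simp only [Fintype.card_sum, Fintype.card_fin]
    omega

theorem exists_isometry_map_eq (hω : ω.IsSymm) (hnd : ω.Nondegenerate) {S S' : Submodule ℂ W}
    (hS : finrank ℂ S = finrank ℂ S')
    (hR : finrank ℂ (radicalOn ω S) = finrank ℂ (radicalOn ω S')) :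
    ∃ h : W ≃ₗ[ℂ] W, (∀ x y, ω (h x) (h y) = ω x y) ∧ S.map (h : W →ₗ[ℂ] W) = S' := by
  obtain ⟨t, ht⟩ := Nat.exists_eq_add_of_le (Submodule.finrank_mono (radicalOn_le (ω := ω) S))
  obtain ⟨u, hu⟩ := Nat.exists_eq_add_of_le (finrank_radicalOn_add_finrank_le hω.isRefl hnd S)
  generalize hr : finrank ℂ (radicalOn ω S) = r at ht hu
  obtain ⟨b, hb, hbS⟩ := exists_wittBasis hω hnd hr ht (u := u) (by omega)
  obtain ⟨b', hb', hbS'⟩ := exists_wittBasis hω hnd (hR.symm.trans hr) (hS ▸ ht) (u := u)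
    (by omega)
  have hgram : ∀ i j, ω (b i) (b j) = ω (b' i) (b' j) := by
    intro i j
    obtain ⟨i, rfl⟩ := Sum.map_surjective.mpr
      ⟨hyperbolicSwap_involutive.surjective, Function.surjective_id⟩ i
    rw [hb, hb']
  refine ⟨b.equiv b' (Equiv.refl _), basis_equiv_isometry b b' hgram, ?_⟩
  rw [← hbS, ← hbS', Submodule.map_span, ← Set.range_comp]
  congr 2
  ext i
  simp

end Complex

/-- **Witt's theorem** (orbit classification): two linear maps `A, B : V → W` lie in the same
orbit of `GL(V) × O(ω)` if and only if they have the same rank and the radicals of the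
restrictions of `ω` to their ranges have the same dimension. -/
theorem witt_orbit_iff {V W : Type*}
    [AddCommGroup V] [Module ℂ V] [FiniteDimensional ℂ V]
    [AddCommGroup W] [Module ℂ W] [FiniteDimensional ℂ W]
    (ω : W →ₗ[ℂ] W →ₗ[ℂ] ℂ)
    (hsymm : ∀ x y : W, ω x y = ω y x)
    (hnd : ∀ x : W, (∀ y : W, ω x y = 0) → x = 0)
    (A B : V →ₗ[ℂ] W) :
    (∃ (g : V ≃ₗ[ℂ] V) (h : W ≃ₗ[ℂ] W),
        (∀ x y : W, ω (h x) (h y) = ω x y) ∧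
        B = (h : W →ₗ[ℂ] W) ∘ₗ A ∘ₗ (g : V →ₗ[ℂ] V)) ↔
      (Module.finrank ℂ (LinearMap.range A) = Module.finrank ℂ (LinearMap.range B) ∧
       Module.finrank ℂ (radicalOn ω (LinearMap.range A)) =
         Module.finrank ℂ (radicalOn ω (LinearMap.range B))) := by
  have hω : LinearMap.BilinForm.IsSymm ω := ⟨hsymm⟩
  have hnondeg : LinearMap.BilinForm.Nondegenerate ω :=
    ⟨hnd, fun y hy => hnd y fun x => (hsymm y x).trans (hy x)⟩
  constructor
  · rintro ⟨g, h, hh, rfl⟩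
    have hrange : LinearMap.range ((h : W →ₗ[ℂ] W) ∘ₗ A ∘ₗ (g : V →ₗ[ℂ] V)) =
        (LinearMap.range A).map (h : W →ₗ[ℂ] W) := by
      rw [LinearMap.range_comp, LinearMap.range_comp, LinearEquiv.range, Submodule.map_top]
    rw [hrange, ← map_radicalOn hh, LinearEquiv.finrank_map_eq, LinearEquiv.finrank_map_eq]
    exact ⟨rfl, rfl⟩
  · rintro ⟨hrank, hrad⟩
    obtain ⟨h, hh, hmap⟩ := exists_isometry_map_eq hω hnondeg hrank hrad
    obtain ⟨g, hg⟩ := LinearMap.exists_comp_linearEquiv_eq_of_range_eq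
      (A := (h : W →ₗ[ℂ] W) ∘ₗ A) (B := B) (by rw [LinearMap.range_comp, hmap])
    exact ⟨g, h, hh, by rw [hg, LinearMap.comp_assoc]⟩
end
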